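/- arXiv:2308.14077 — 2 statements merged into one kernel-verified Lean document; each statement's English description precedes it below -/
import Mathlib

section
/- Let B be an n×n Boolean matrix with all diagonal entries equal to 1, and let r > 0. Then B is r-indecomposable if and only if its precedence graph G(B) is r-connected (remains strongly connected after removal of any r−1 vertices). -/
instance : CommSemiring Bool where
  add := or
  add_assoc := by decide
  zero := false
  zero_add := by decide
  add_zero := by decide
  add_comm := by decide
  mul := and
  mul_assoc := by decide
  one := true
  one_mul := by decide
  mul_one := by decide
  zero_mul := by decide
  mul_zero := by decide
  left_distrib := by decide
  right_distrib := by decide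
  mul_comm := by decide
  nsmul := fun n b => if n = 0 then false else b
  nsmul_zero := by intro b; rfl
  nsmul_succ := by intro n b; show (if n + 1 = 0 then false else b) = ((if n = 0 then false else b) || b); cases b <;> by_cases h : n = 0 <;> simp [h]
  natCast := fun n => if n = 0 then false else true
  natCast_zero := rfl
  natCast_succ := by intro n; by_cases h : n = 0 <;> simp [h] <;> rfl

abbrev BMat (n : ℕ) := Matrix (Fin n) (Fin n) Bool

/-- `B` is `r`-indecomposable: there are no permutation matrices `P, Q` such that `PBQ`
has an `s × t` all-zero top-right block with `s + t + r > n` (for genuine blocks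
`1 ≤ s, t ≤ n`). -/
def Indecomposable (n r : ℕ) (B : BMat n) : Prop :=
  ¬ ∃ (σ τ : Equiv.Perm (Fin n)) (s t : ℕ), 1 ≤ s ∧ 1 ≤ t ∧ s ≤ n ∧ t ≤ n ∧
      n < s + t + r ∧
      ∀ i j : Fin n, (i : ℕ) < s → n - t ≤ (j : ℕ) → B (σ i) (τ j) = false

/-- The precedence graph of `B` is `r`-connected: after removing any set of at most
`r - 1` vertices it remains strongly connected. -/
def RConnected (n r : ℕ) (B : BMat n) : Prop :=
  ∀ S : Finset (Fin n), S.card ≤ r - 1 → ∀ i j : Fin n, i ∉ S → j ∉ S →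
    Relation.ReflTransGen (fun a b : Fin n => a ∉ S ∧ b ∉ S ∧ B a b = true) i j



lemma exists_perm_front {n : ℕ} (A : Finset (Fin n)) :
    ∃ σ : Equiv.Perm (Fin n), ∀ i : Fin n, (i : ℕ) < A.card → σ i ∈ A := by
  classical
  have hs : A.card ≤ n := by simpa using A.card_le_univ
  have h : n = A.card + (n - A.card) := by omega
  have hc : n - A.card = Aᶜ.card := by simp [Finset.card_compl]
  refine ⟨(finCongr h).trans ((finSumFinEquiv.symm).trans
    ((Equiv.sumCongr A.equivFin.symm
      (((finCongr hc).trans Aᶜ.equivFin.symm).trans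
        (Equiv.subtypeEquivRight (fun x => Finset.mem_compl)))).trans
      (Equiv.sumCompl (· ∈ A)))), ?_⟩
  intro i hi
  have hcast : (finCongr h) i = Fin.castAdd (n - A.card) ⟨(i : ℕ), hi⟩ := by
    ext; simp
  simp only [Equiv.trans_apply, hcast, finSumFinEquiv_symm_apply_castAdd,
    Equiv.sumCongr_apply, Sum.map_inl, Equiv.sumCompl_apply_inl]
  exact Finset.coe_mem _

lemma exists_perm_back {n : ℕ} (D : Finset (Fin n)) :
    ∃ τ : Equiv.Perm (Fin n), ∀ j : Fin n, n - D.card ≤ (j : ℕ) → τ j ∈ D := by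
  classical
  have hs : D.card ≤ n := by simpa using D.card_le_univ
  have h : n = (n - D.card) + D.card := by omega
  have hc : n - D.card = Dᶜ.card := by simp [Finset.card_compl]
  refine ⟨(finCongr h).trans ((finSumFinEquiv.symm).trans
    ((Equiv.sumCongr (((finCongr hc).trans Dᶜ.equivFin.symm).trans
        (Equiv.subtypeEquivRight (fun x => Finset.mem_compl))) D.equivFin.symm).trans
      ((Equiv.sumComm _ _).trans (Equiv.sumCompl (· ∈ D))))), ?_⟩
  intro j hj
  have hjn : (j : ℕ) - (n - D.card) < D.card := by omega
  have hcast : (finCongr h) j = Fin.natAdd (n - D.card) ⟨(j : ℕ) - (n - D.card), hjn⟩ := by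
    ext; simp; omega
  simp only [Equiv.trans_apply, hcast, finSumFinEquiv_symm_apply_natAdd,
    Equiv.sumCongr_apply, Sum.map_inr, Equiv.sumComm_apply, Sum.swap_inr,
    Equiv.sumCompl_apply_inl]
  exact Finset.coe_mem _

lemma card_filter_lt (n s : ℕ) (hs : s ≤ n) :
    (Finset.univ.filter fun i : Fin n => (i : ℕ) < s).card = s := by
  have : (Finset.univ.filter fun i : Fin n => (i : ℕ) < s)
      = Finset.univ.map ⟨Fin.castLE hs, Fin.castLE_injective hs⟩ := by
    ext i
    simp only [Finset.mem_filter, Finset.mem_univ, true_and, Finset.mem_map,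
      Function.Embedding.coeFn_mk]
    constructor
    · intro h; exact ⟨⟨(i : ℕ), h⟩, rfl⟩
    · rintro ⟨a, rfl⟩; exact a.isLt
  rw [this]; simp

lemma card_filter_ge (n t : ℕ) (ht : t ≤ n) :
    (Finset.univ.filter fun j : Fin n => n - t ≤ (j : ℕ)).card = t := by
  have hinj : Function.Injective (fun k : Fin t => (⟨n - t + (k : ℕ), by omega⟩ : Fin n)) := by
    intro a b hab
    have := Fin.val_eq_of_eq hab
    simp at this; ext; omega
  have : (Finset.univ.filter fun j : Fin n => n - t ≤ (j : ℕ))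
      = Finset.univ.map ⟨fun k : Fin t => ⟨n - t + (k : ℕ), by omega⟩, hinj⟩ := by
    ext j
    simp only [Finset.mem_filter, Finset.mem_univ, true_and, Finset.mem_map,
      Function.Embedding.coeFn_mk]
    constructor
    · intro h
      refine ⟨⟨(j : ℕ) - (n - t), by omega⟩, ?_⟩
      ext; simp; omega
    · rintro ⟨a, rfl⟩; simp
  rw [this]; simp


/-- For a Boolean matrix with all-ones diagonal and `r > 0`, `r`-indecomposability is
equivalent to `r`-connectivity of its precedence graph. -/
theorem indecomposable_iff_rconnected (n r : ℕ) (hr : 0 < r) (B : BMat n)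
    (hdiag : ∀ i, B i i = true) :
    Indecomposable n r B ↔ RConnected n r B := by
  classical
  constructor
  · -- Indecomposable → RConnected
    intro hInd S hS i j hi hj
    by_contra hpath
    set rel := fun a b : Fin n => a ∉ S ∧ b ∉ S ∧ B a b = true with hrel
    set A : Finset (Fin n) :=
      Finset.univ.filter (fun v => v ∉ S ∧ Relation.ReflTransGen rel i v) with hA
    set D : Finset (Fin n) :=
      Finset.univ.filter (fun v => v ∉ S ∧ ¬ Relation.ReflTransGen rel i v) with hD
    have hiA : i ∈ A := Finset.mem_filter.mpr ⟨Finset.mem_univ _, hi, Relation.ReflTransGen.refl⟩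
    have hjD : j ∈ D := by simp [hD, hj, hpath]
    have hAD : Disjoint A D := by
      rw [Finset.disjoint_left]
      intro x hx hx'
      simp [hA] at hx; simp [hD] at hx'
      exact hx'.2 hx.2
    have hunion : A ∪ D = Sᶜ := by
      ext x
      simp [hA, hD, Finset.mem_compl]
      tauto
    have hcards : A.card + D.card = n - S.card := by
      rw [← Finset.card_union_of_disjoint hAD, hunion, Finset.card_compl]
      simp
    have hAle : A.card ≤ n := by simpa using A.card_le_univ
    have hDle : D.card ≤ n := by simpa using D.card_le_univ
    have hA1 : 1 ≤ A.card := Finset.card_pos.mpr ⟨i, hiA⟩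
    have hD1 : 1 ≤ D.card := Finset.card_pos.mpr ⟨j, hjD⟩
    have hSn : S.card ≤ n := by simpa using S.card_le_univ
    have hzero : ∀ a ∈ A, ∀ d ∈ D, B a d = false := by
      intro a ha d hd
      simp [hA] at ha; simp [hD] at hd
      by_contra hne
      have hB : B a d = true := by
        cases h : B a d
        · exact absurd h hne
        · rfl
      exact hd.2 (ha.2.tail ⟨ha.1, hd.1, hB⟩)
    obtain ⟨σ, hσ⟩ := exists_perm_front A
    obtain ⟨τ, hτ⟩ := exists_perm_back D
    exact hInd ⟨σ, τ, A.card, D.card, hA1, hD1, hAle, hDle, by omega,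
      fun i' j' hi' hj' => hzero _ (hσ i' hi') _ (hτ j' hj')⟩
  · -- RConnected → Indecomposable
    intro hRC
    rintro ⟨σ, τ, s, t, hs1, ht1, hsn, htn, hstr, hzero⟩
    set A : Finset (Fin n) :=
      (Finset.univ.filter fun i : Fin n => (i : ℕ) < s).image σ with hA
    set D : Finset (Fin n) :=
      (Finset.univ.filter fun j : Fin n => n - t ≤ (j : ℕ)).image τ with hD
    have hcardA : A.card = s := by
      rw [hA, Finset.card_image_of_injective _ σ.injective, card_filter_lt n s hsn]
    have hcardD : D.card = t := by
      rw [hD, Finset.card_image_of_injective _ τ.injective, card_filter_ge n t htn]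
    have hBAD : ∀ a ∈ A, ∀ d ∈ D, B a d = false := by
      intro a ha d hd
      simp only [hA, hD, Finset.mem_image, Finset.mem_filter, Finset.mem_univ,
        true_and] at ha hd
      obtain ⟨i', hi', rfl⟩ := ha
      obtain ⟨j', hj', rfl⟩ := hd
      exact hzero i' j' hi' hj'
    have hAD : Disjoint A D := by
      rw [Finset.disjoint_left]
      intro x hx hx'
      have := hBAD x hx x hx'
      rw [hdiag x] at this
      exact Bool.noConfusion this
    set S : Finset (Fin n) := (A ∪ D)ᶜ with hSdef
    have hcardU : (A ∪ D).card = s + t := by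
      rw [Finset.card_union_of_disjoint hAD, hcardA, hcardD]
    have hUle : (A ∪ D).card ≤ n := by simpa using (A ∪ D).card_le_univ
    have hScard : S.card ≤ r - 1 := by
      rw [hSdef, Finset.card_compl, Fintype.card_fin, hcardU]
      omega
    have hn0 : 0 < n := lt_of_lt_of_le hs1 hsn
    set i0 : Fin n := σ ⟨0, hn0⟩ with hi0def
    set j0 : Fin n := τ ⟨n - 1, by omega⟩ with hj0def
    have hi0A : i0 ∈ A := by
      rw [hA]
      exact Finset.mem_image_of_mem _ (by simp; omega)
    have hj0D : j0 ∈ D := by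
      rw [hD]
      exact Finset.mem_image_of_mem _ (by simp; omega)
    have hi0S : i0 ∉ S := by
      rw [hSdef]; simp only [Finset.mem_compl, not_not]
      exact Finset.mem_union_left _ hi0A
    have hj0S : j0 ∉ S := by
      rw [hSdef]; simp only [Finset.mem_compl, not_not]
      exact Finset.mem_union_right _ hj0D
    have hreach := hRC S hScard i0 j0 hi0S hj0S
    have hinv : ∀ v, Relation.ReflTransGen
        (fun a b : Fin n => a ∉ S ∧ b ∉ S ∧ B a b = true) i0 v → v ∈ A := by
      intro v hv
      induction hv with
      | refl => exact hi0A
      | tail hab hbc ih =>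
        rename_i b c
        obtain ⟨hbS, hcS, hBbc⟩ := hbc
        have hcU : c ∈ A ∪ D := by
          by_contra hcU
          exact hcS (by rw [hSdef]; exact Finset.mem_compl.mpr hcU)
        rcases Finset.mem_union.mp hcU with h | h
        · exact h
        · exfalso
          have := hBAD b ih c h
          rw [hBbc] at this
          exact Bool.noConfusion this
    have := hinv j0 hreach
    exact absurd (Finset.disjoint_left.mp hAD this) (not_not.mpr hj0D)
end

section
/- Let A be a nondeterministic finite automaton with n states whose tree width is bounded by k, with 1 ≤ k ≤ n−1. Then the subset construction applied to A produces at most n^k/(k−1)! + 1 states; more precisely, the number of reachable subsets is at most ∑_{i=0}^{k} C(n,i), and ∑_{i=0}^{k} C(n,i) ≤ n^k/(k−1)! + 1. -/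
/-- `NPath M q y p` holds iff `p` is the list of successive states (after `q`) of a run
of the NFA `M` on the word `y` starting in state `q`. -/
inductive NPath {α σ : Type*} (M : NFA α σ) : σ → List α → List σ → Prop
  | nil (q : σ) : NPath M q [] []
  | cons {q q' : σ} {a : α} {w : List α} {p : List σ} :
      q' ∈ M.step q a → NPath M q' w p → NPath M q (a :: w) (q' :: p)

private lemma npath_len {α σ : Type*} {M : NFA α σ} {q : σ} {y : List α} {p : List σ}
    (h : NPath M q y p) : p.length = y.length := by
  induction h with
  | nil => rfl
  | cons _ _ ih => simp [ih]

private lemma mem_evalFrom_iff {α σ : Type*} (M : NFA α σ) :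
    ∀ (y : List α) (S : Set σ) (s : σ),
      s ∈ M.evalFrom S y ↔
        ∃ q ∈ S, ∃ p : List σ, NPath M q y p ∧
          (q :: p).getLast (List.cons_ne_nil _ _) = s := by
  intro y
  induction y with
  | nil =>
    intro S s
    simp only [NFA.evalFrom_nil]
    constructor
    · intro hs; exact ⟨s, hs, [], NPath.nil s, rfl⟩
    · rintro ⟨q, hq, p, hp, hlast⟩
      cases hp
      simpa using hlast ▸ hq
  | cons a y ih =>
    intro S s
    rw [show M.evalFrom S (a :: y) = M.evalFrom (M.stepSet S a) y from rfl, ih]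
    constructor
    · rintro ⟨q', hq', p, hp, hlast⟩
      rw [NFA.mem_stepSet] at hq'
      obtain ⟨q, hq, hstep⟩ := hq'
      refine ⟨q, hq, q' :: p, NPath.cons hstep hp, ?_⟩
      rw [List.getLast_cons (List.cons_ne_nil _ _)]
      exact hlast
    · rintro ⟨q, hq, p, hp, hlast⟩
      cases hp with
      | cons hstep htail =>
        refine ⟨_, NFA.mem_stepSet.mpr ⟨q, hq, hstep⟩, _, htail, ?_⟩
        rw [← hlast, List.getLast_cons (List.cons_ne_nil _ _)]

private lemma card_evalFrom_le {α σ : Type*} [Fintype σ] (M : NFA α σ) (k : ℕ)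
    (htw : ∀ y : List α,
      Nat.card {pq : σ × List σ // pq.1 ∈ M.start ∧ NPath M pq.1 y pq.2} ≤ k)
    (y : List α) : (M.evalFrom M.start y).ncard ≤ k := by
  classical
  have hfin : Finite {pq : σ × List σ // pq.1 ∈ M.start ∧ NPath M pq.1 y pq.2} := by
    have h1 : {pq : σ × List σ | pq.1 ∈ M.start ∧ NPath M pq.1 y pq.2} ⊆
        Set.univ ×ˢ {l : List σ | l.length = y.length} := by
      rintro ⟨q, p⟩ ⟨-, hp⟩
      exact ⟨trivial, npath_len hp⟩
    exact ((Set.finite_univ.prod (List.finite_length_eq σ y.length)).subset h1).to_subtype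
  have hch : ∀ s : M.evalFrom M.start y, ∃ pq : σ × List σ,
      (pq.1 ∈ M.start ∧ NPath M pq.1 y pq.2) ∧
      (pq.1 :: pq.2).getLast (List.cons_ne_nil _ _) = (s : σ) := by
    intro s
    obtain ⟨q, hq, p, hp, hl⟩ := (mem_evalFrom_iff M y M.start s).mp s.2
    exact ⟨(q, p), ⟨hq, hp⟩, hl⟩
  choose f hf1 hf2 using hch
  rw [← Nat.card_coe_set_eq]
  refine le_trans (Nat.card_le_card_of_injective
    (fun s => (⟨f s, hf1 s⟩ :
      {pq : σ × List σ // pq.1 ∈ M.start ∧ NPath M pq.1 y pq.2})) ?_) (htw y)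
  intro s t hst
  have hft : f s = f t := by simpa using congrArg Subtype.val hst
  apply Subtype.ext
  rw [← hf2 s, ← hf2 t]
  congr 1
  rw [hft]

private lemma sum_choose_mul_le (n : ℕ) : ∀ m : ℕ, m + 2 ≤ n →
    (∑ i ∈ Finset.Icc 1 (m + 1), n.choose i) * m.factorial ≤ n ^ (m + 1) := by
  intro m
  induction m with
  | zero =>
    intro h
    simp [Nat.choose_one_right]
  | succ m ih =>
    intro hn
    have IH := ih (by omega)
    rw [Finset.sum_Icc_succ_top (by omega)]
    set S := ∑ i ∈ Finset.Icc 1 (m + 1), n.choose i with hS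
    set C := n.choose (m + 2) with hC
    have hdesc : (m + 2).factorial * C ≤ n ^ (m + 2) := by
      rw [hC, ← Nat.descFactorial_eq_factorial_mul_choose]
      exact Nat.descFactorial_le_pow _ _
    refine Nat.le_of_mul_le_mul_left ?_ (show 0 < m + 2 by omega)
    have e1 : (m + 1).factorial = (m + 1) * m.factorial := Nat.factorial_succ m
    have e2 : (m + 2).factorial = (m + 2) * ((m + 1) * m.factorial) := by
      rw [Nat.factorial_succ (m + 1), e1]
    calc (m + 2) * ((S + C) * (m + 1).factorial)
        = ((m + 2) * (m + 1)) * (S * m.factorial) + (m + 2).factorial * C := by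
          rw [e1, e2]; ring
      _ ≤ ((m + 2) * (m + 1)) * n ^ (m + 1) + n ^ (m + 2) :=
          Nat.add_le_add (Nat.mul_le_mul_left _ IH) hdesc
      _ ≤ ((m + 1) * n) * n ^ (m + 1) + n ^ (m + 2) := by
          have : (m + 2) * (m + 1) ≤ (m + 1) * n :=
            Nat.mul_comm (m + 2) (m + 1) ▸ Nat.mul_le_mul_left (m + 1) (by omega)
          exact Nat.add_le_add_right (Nat.mul_le_mul_right _ this) _
      _ = (m + 2) * n ^ (m + 1 + 1) := by ring
/-- If an NFA with `n` states has tree width at most `k` (`1 ≤ k ≤ n - 1`), then the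
subset construction reaches at most `∑_{i=0}^{k} C(n,i)` subsets, and this number is at
most `n ^ k / (k-1)! + 1`. -/
theorem subset_construction_of_bounded_tree_width {α σ : Type*} [Fintype σ]
    (M : NFA α σ) (n k : ℕ) (hn : Fintype.card σ = n) (hk1 : 1 ≤ k) (hk2 : k ≤ n - 1)
    (htw : ∀ y : List α,
      Nat.card {pq : σ × List σ // pq.1 ∈ M.start ∧ NPath M pq.1 y pq.2} ≤ k) :
    Nat.card {S : Set σ | ∃ y : List α, M.evalFrom M.start y = S} ≤
        ∑ i ∈ Finset.range (k + 1), n.choose i ∧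
      ∑ i ∈ Finset.range (k + 1), n.choose i ≤ n ^ k / (k - 1).factorial + 1 := by
  classical
  constructor
  · set R := {S : Set σ | ∃ y : List α, M.evalFrom M.start y = S} with hR
    set B : Finset (Finset σ) :=
      (Finset.range (k + 1)).biUnion (fun i => Finset.powersetCard i Finset.univ) with hB
    have hmem : ∀ S : R, (S : Set σ).toFinset ∈ B := by
      rintro ⟨S, y, rfl⟩
      simp only [hB, Finset.mem_biUnion, Finset.mem_range, Finset.mem_powersetCard]
      refine ⟨(M.evalFrom M.start y).toFinset.card, ?_, Finset.subset_univ _, rfl⟩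
      rw [Nat.lt_succ_iff, ← Set.ncard_eq_toFinset_card']
      exact card_evalFrom_le M k htw y
    have hinj : Function.Injective (fun S : R => (⟨(S : Set σ).toFinset, hmem S⟩ : B)) := by
      intro S T h
      apply Subtype.ext
      have := congrArg Subtype.val h
      simpa [Set.toFinset_inj] using this
    calc Nat.card R ≤ Nat.card B := Nat.card_le_card_of_injective _ hinj
      _ = B.card := Nat.card_eq_finsetCard B
      _ ≤ ∑ i ∈ Finset.range (k + 1),
            (Finset.powersetCard i (Finset.univ : Finset σ)).card :=
          Finset.card_biUnion_le
      _ = ∑ i ∈ Finset.range (k + 1), n.choose i := by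
          simp [Finset.card_powersetCard, hn]
  · obtain ⟨m, rfl⟩ : ∃ m, k = m + 1 := ⟨k - 1, by omega⟩
    have h := sum_choose_mul_le n m (by omega)
    rw [Finset.range_eq_Ico, Finset.sum_eq_sum_Ico_succ_bot (by omega)]
    simp only [Nat.choose_zero_right, Nat.add_sub_cancel, Finset.Ico_add_one_right_eq_Icc, Nat.zero_add]
    have hdiv : ∑ i ∈ Finset.Icc 1 (m + 1), n.choose i ≤ n ^ (m + 1) / m.factorial :=
      (Nat.le_div_iff_mul_le m.factorial_pos).mpr h
    omega
end
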